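/- arXiv:1411.2127 — 2 statements merged into one kernel-verified Lean document; each statement's English description precedes it below -/
import Mathlib

section
/- Let 𝛂 be a set of directed paths in a finite directed acyclic graph G that is live for a vertex set 𝐘, and let π_{𝔞_𝛂} be a path intervention in which the paths of a subset 𝛂* ⊆ 𝛂 are assigned constant values and the paths of 𝛂∖𝛂* are assigned the natural values of their sources. If π_{𝔞_𝛂} is natural for 𝐘 (i.e. no element of rel_G(𝐘|𝛂*) with a prefix subpath in 𝛂* contains a subpath in 𝛂∖𝛂*), then in every causal structure for G the joint distribution of the responses {Y(𝔞_𝛂) : Y ∈ 𝐘} equals the joint distribution of {Y(𝔞_{𝛂*}) : Y ∈ 𝐘}, the responses to the path intervention on 𝛂* alone with the same constant assignments. -/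
open scoped Classical
open MeasureTheory

namespace CausalHierarchy

variable {V : Type}

/-- A directed path in a directed graph with edge relation `edge`:
a nonempty list of vertices in which each consecutive pair is joined by an edge. -/
structure DiPath (edge : V → V → Prop) : Type where
  verts : List V
  ne : verts ≠ []
  chain : verts.Chain' edge

namespace DiPath

variable {edge : V → V → Prop}

/-- The source (first vertex) of a directed path. -/
def src (p : DiPath edge) : V := p.verts.head p.ne

/-- The sink (last vertex) of a directed path. -/
def sink (p : DiPath edge) : V := p.verts.getLast p.ne

/-- The second vertex of a directed path (junk value for single-vertex paths). -/
def snd2 (p : DiPath edge) : V := p.verts.tail.headD p.src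

/-- The first edge of a directed path, as an ordered pair of vertices. -/
def firstEdge (p : DiPath edge) : V × V := (p.src, p.snd2)

/-- `q` is a (contiguous) subpath of `p`. -/
def Subpath (q p : DiPath edge) : Prop := ∃ l r, p.verts = l ++ q.verts ++ r

/-- `q` is a prefix subpath of `p`. -/
def IsPrefix (q p : DiPath edge) : Prop := q.verts <+: p.verts

/-- `q` is a suffix subpath of `p`. -/
def IsSuffix (q p : DiPath edge) : Prop := q.verts <:+ p.verts

end DiPath

/-- A directed graph is acyclic if its transitive closure is irreflexive. -/
def Acyclic (edge : V → V → Prop) : Prop := Irreflexive (Relation.TransGen edge)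

theorem Acyclic.wf [Finite V] {edge : V → V → Prop} (h : Acyclic edge) :
    WellFounded (Relation.TransGen edge) := by
  have h1 : IsIrrefl V (Relation.TransGen edge) := ⟨h⟩
  have h2 : IsTrans V (Relation.TransGen edge) := ⟨fun _ _ _ => Relation.TransGen.trans⟩
  exact Finite.wellFounded_of_trans_of_irrefl _

/-- A set of directed paths is proper if no path in it is a prefix subpath of another. -/
def Proper {edge : V → V → Prop} (A : Set (DiPath edge)) : Prop :=
  ∀ p ∈ A, ∀ q ∈ A, p.IsPrefix q → p = q

/-- `rel edge Y A`: the directed paths relevant for `Y` given `A`: paths with sink in `Y`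
such that no member of `A` is a subpath, except possibly a prefix subpath. -/
def rel (edge : V → V → Prop) (Y : Set V) (A : Set (DiPath edge)) : Set (DiPath edge) :=
  {α | α.sink ∈ Y ∧ ∀ β ∈ A, β.Subpath α → β.IsPrefix α}

/-- A path `α` is live for `Y` given `A` if some relevant path has it as a prefix. -/
def Live (edge : V → V → Prop) (Y : Set V) (A : Set (DiPath edge)) (α : DiPath edge) : Prop :=
  ∃ p ∈ rel edge Y A, α.IsPrefix p

/-- The set of members of `A` live for `Y` given `A`. -/
def liveSub (edge : V → V → Prop) (Y : Set V) (A : Set (DiPath edge)) : Set (DiPath edge) :=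
  {α ∈ A | Live edge Y A α}

/-- `A` is live for `Y` if every member of `A` is live for `Y` given `A`. -/
def LiveSet (edge : V → V → Prop) (Y : Set V) (A : Set (DiPath edge)) : Prop :=
  ∀ α ∈ A, Live edge Y A α

/-- The funnel operator for the edge `(w,y)`: paths of the form `(a,…,w,y)` are truncated
to `(a,…,w)`, paths containing `w` not ending with the edge `(w,y)` are removed, and other
paths are kept unchanged. -/
def funnel {edge : V → V → Prop} (w y : V) (A : Set (DiPath edge)) : Set (DiPath edge) :=
  {q | (q ∈ A ∧ w ∉ q.verts) ∨ (q.sink = w ∧ ∃ p ∈ A, p.verts = q.verts ++ [y])}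

/-- `alphaSet edge A Y`: all directed paths (with at least one edge) with source in `A`,
sink in `A ∪ Y`, and not intersecting `A ∪ Y` except at the source and sink. -/
def alphaSet (edge : V → V → Prop) (A Y : Set V) : Set (DiPath edge) :=
  {p | 2 ≤ p.verts.length ∧ p.src ∈ A ∧ p.sink ∈ A ∪ Y ∧
       ∀ l₁ v l₂, p.verts = l₁ ++ v :: l₂ → v ∈ A ∪ Y → l₁ = [] ∨ l₂ = []}

/-- The set of first edges of the (nontrivial) paths in `A`. -/
def firstEdges {edge : V → V → Prop} (A : Set (DiPath edge)) : Set (V × V) :=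
  {e | ∃ p ∈ A, 2 ≤ p.verts.length ∧ e = p.firstEdge}

/-- A causal structure for the graph `(V, edge)` with state spaces `X`: a probability space
together with, for each vertex `v` and assignment of values to its parents, a random
variable (the one-step-ahead potential outcome).  The function `f v` takes a full tuple of
values but depends only on the coordinates of parents of `v`. -/
structure CausalStructure (V : Type) (edge : V → V → Prop) (X : V → Type) : Type 1 where
  Ω : Type
  m : MeasurableSpace Ω
  μ : @MeasureTheory.Measure Ω m
  prob : μ Set.univ = 1
  f : (v : V) → ((w : V) → X w) → Ω → X v
  localDep : ∀ v x y, (∀ w, edge w v → x w = y w) → f v x = f v y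

variable {X : V → Type}

/-- The natural (observed) variable of each vertex, obtained by recursive substitution with
no intervention. -/
noncomputable def observed [Finite V] {edge : V → V → Prop} [∀ v, Nonempty (X v)]
    (hG : Acyclic edge) (C : CausalStructure V edge X) (v : V) : C.Ω → X v :=
  hG.wf.fix (C := fun u => C.Ω → X u)
    (fun v IH ω => C.f v (fun w =>
      if h : Relation.TransGen edge w v then IH w h ω else Classical.arbitrary (X w)) ω) v

/-- The response to the node intervention setting the vertices of `A` to the values `a`,
defined by recursive substitution. -/
noncomputable def nodeResp [Finite V] {edge : V → V → Prop} [∀ v, Nonempty (X v)]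
    (hG : Acyclic edge) (C : CausalStructure V edge X)
    (A : Set V) (a : ∀ u, X u) (v : V) : C.Ω → X v :=
  hG.wf.fix (C := fun u => C.Ω → X u)
    (fun v IH ω => C.f v (fun w =>
      if w ∈ A then a w
      else if h : Relation.TransGen edge w v then IH w h ω
      else Classical.arbitrary (X w)) ω) v

/-- The response to the edge intervention assigning, to each edge `e ∈ E`, the value
`aE e e.1` (a value in the state space of the source of `e`), defined by recursive
substitution. -/
noncomputable def edgeResp [Finite V] {edge : V → V → Prop} [∀ v, Nonempty (X v)]
    (hG : Acyclic edge) (C : CausalStructure V edge X)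
    (E : Set (V × V)) (aE : V × V → ∀ u, X u) (v : V) : C.Ω → X v :=
  hG.wf.fix (C := fun u => C.Ω → X u)
    (fun v IH ω => C.f v (fun w =>
      if (w, v) ∈ E then aE (w, v) w
      else if h : Relation.TransGen edge w v then IH w h ω
      else Classical.arbitrary (X w)) ω) v

/-- The funneled path assignment: the truncation of a path of `A` by the funnel operator for
`(w,y)` receives the value assigned to the original path; other paths keep their values. -/
noncomputable def funnelAssign {edge : V → V → Prop} (w y : V) (A : Set (DiPath edge))
    (a : DiPath edge → ∀ u, X u) (q : DiPath edge) : ∀ u, X u :=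
  if h : q.sink = w ∧ ∃ p ∈ A, p.verts = q.verts ++ [y] then a h.2.choose else a q

/-- The response to the path intervention assigning, to each directed path `p ∈ A`, the
value `a p p.src` (a value in the state space of the source of `p`), defined by recursive
substitution via the funnel operator. -/
noncomputable def pathResp [Finite V] {edge : V → V → Prop} [∀ v, Nonempty (X v)]
    (hG : Acyclic edge) (C : CausalStructure V edge X)
    (A : Set (DiPath edge)) (a : DiPath edge → ∀ u, X u) (v : V) : C.Ω → X v :=
  hG.wf.fix (C := fun u => Set (DiPath edge) → (DiPath edge → ∀ z, X z) → C.Ω → X u)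
    (fun v IH A a ω => C.f v (fun w =>
      if h : ∃ p ∈ A, p.verts = [w, v] then a h.choose w
      else if hw : Relation.TransGen edge w v then
        IH w hw (funnel w v A) (funnelAssign w v A a) ω
      else Classical.arbitrary (X w)) ω) v A a

/-- The response to the path intervention in which the paths of `Astar ⊆ A` are assigned
the constant values `a`, and the paths of `A ∖ Astar` are assigned the natural values of
their sources, defined by recursive substitution via the funnel operator. -/
noncomputable def pathRespNat [Finite V] {edge : V → V → Prop} [∀ v, Nonempty (X v)]
    (hG : Acyclic edge) (C : CausalStructure V edge X)
    (A Astar : Set (DiPath edge)) (a : DiPath edge → ∀ u, X u) (v : V) : C.Ω → X v :=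
  hG.wf.fix (C := fun u =>
      Set (DiPath edge) → Set (DiPath edge) → (DiPath edge → ∀ z, X z) → C.Ω → X u)
    (fun v IH A Astar a ω => C.f v (fun w =>
      if h : ∃ p ∈ A, p.verts = [w, v] then
        (if h.choose ∈ Astar then a h.choose w else observed hG C w ω)
      else if hw : Relation.TransGen edge w v then
        IH w hw (funnel w v A) (funnel w v Astar) (funnelAssign w v A a) ω
      else Classical.arbitrary (X w)) ω) v A Astar a

/-- The observed distribution `p(𝐕)`, as a probability mass function. -/
noncomputable def obsDist [Finite V] {edge : V → V → Prop} [∀ v, Nonempty (X v)]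
    (hG : Acyclic edge) (C : CausalStructure V edge X) : (∀ v, X v) → ENNReal :=
  fun s => C.μ {ω | ∀ v, observed hG C v ω = s v}

/-- The single world model (Robins' FFRCISTG model): for every joint value assignment `x`,
the one-step-ahead variables `{V(x_{pa(V)}) : V ∈ 𝐕}` are mutually independent. -/
def SWM {edge : V → V → Prop} (C : CausalStructure V edge X) : Prop :=
  ∀ x : ∀ u, X u, ∀ (S : Finset V) (s : ∀ u, X u),
    C.μ {ω | ∀ v ∈ S, C.f v x ω = s v} = ∏ v ∈ S, C.μ {ω | C.f v x ω = s v}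

/-- The multiple worlds model (Pearl's NPSEM-IE): the families
`{V(x) : x an assignment to pa(V)}`, one family per vertex, are mutually independent. -/
def MWM {edge : V → V → Prop} (C : CausalStructure V edge X) : Prop :=
  ∀ (S : Finset V) (g : ∀ v, ((∀ u, X u) → X v)),
    C.μ {ω | ∀ v ∈ S, (fun x => C.f v x ω) = g v} =
      ∏ v ∈ S, C.μ {ω | (fun x => C.f v x ω) = g v}

/-- The conditional probability `p(val | values c of the parents of v)` of the observed
distribution. -/
noncomputable def condProb [Finite V] {edge : V → V → Prop} [∀ v, Nonempty (X v)]
    (hG : Acyclic edge) (C : CausalStructure V edge X)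
    (v : V) (val : X v) (c : ∀ u, X u) : ENNReal :=
  C.μ {ω | observed hG C v ω = val ∧ ∀ w, edge w v → observed hG C w ω = c w} /
    C.μ {ω | ∀ w, edge w v → observed hG C w ω = c w}

/-- A response distribution `R` is identified from `p(𝐕)` under the model `M` if any two
causal structures in `M` with the same observed distribution give it the same value. -/
def Identified [Finite V] {edge : V → V → Prop} [∀ v, Nonempty (X v)] (hG : Acyclic edge)
    (M : CausalStructure V edge X → Prop)
    (R : CausalStructure V edge X → (∀ v, X v) → ENNReal) : Prop :=
  ∀ C₁ C₂, M C₁ → M C₂ → obsDist hG C₁ = obsDist hG C₂ → R C₁ = R C₂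

/-- Paths relevant for `Y` given a set of edges `E`: sink in `Y` and no edge of `E` occurs
in the path except possibly as the first edge. -/
def relE (edge : V → V → Prop) (Y : Set V) (E : Set (V × V)) : Set (DiPath edge) :=
  {p | p.sink ∈ Y ∧ ∀ l₁ w v l₂, p.verts = l₁ ++ w :: v :: l₂ → (w, v) ∈ E → l₁ = []}

/-- A set of edges is live for `Y` if each of its edges begins some relevant path. -/
def LiveE (edge : V → V → Prop) (Y : Set V) (E : Set (V × V)) : Prop :=
  ∀ e ∈ E, ∃ p ∈ relE edge Y E, ∃ l, p.verts = e.1 :: e.2 :: l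

/-- A set of edges live for `Y` is consistent for `Y` if for every vertex `a`, the set of
first edges of relevant paths with source `a` is contained in `E` or disjoint from `E`. -/
def ConsistentE (edge : V → V → Prop) (Y : Set V) (E : Set (V × V)) : Prop :=
  ∀ a : V, (∀ p ∈ relE edge Y E, ∀ b l, p.verts = a :: b :: l → (a, b) ∈ E) ∨
           (∀ p ∈ relE edge Y E, ∀ b l, p.verts = a :: b :: l → (a, b) ∉ E)

/-- An edge intervention is node consistent for `Y` if its edge set is live and consistent
for `Y` and all edges sharing a source are assigned the same value. -/
def NodeConsistent {X : V → Type} (edge : V → V → Prop) (Y : Set V) (E : Set (V × V))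
    (aE : V × V → ∀ u, X u) : Prop :=
  LiveE edge Y E ∧ ConsistentE edge Y E ∧
    ∀ e ∈ E, ∀ e' ∈ E, e.1 = e'.1 → aE e e.1 = aE e' e.1

/-- A proper set of paths live for `Y` is consistent for `Y` if whenever the first edge of
some path of `A` occurs in a relevant path `β`, it is the first edge of a prefix subpath of
`β` belonging to `A`. -/
def ConsistentP (edge : V → V → Prop) (Y : Set V) (A : Set (DiPath edge)) : Prop :=
  ∀ a b : V, (∃ p ∈ A, ∃ l, p.verts = a :: b :: l) →
    ∀ β ∈ rel edge Y A, (∃ l₁ l₂, β.verts = l₁ ++ a :: b :: l₂) →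
      ∃ q ∈ A, q.IsPrefix β ∧ ∃ l', q.verts = a :: b :: l'

/-- A path intervention is edge consistent for `Y` if its path set is live and consistent
for `Y` and all paths sharing the same first edge are assigned the same value. -/
def EdgeConsistentP {X : V → Type} (edge : V → V → Prop) (Y : Set V)
    (A : Set (DiPath edge)) (a : DiPath edge → ∀ u, X u) : Prop :=
  LiveSet edge Y A ∧ ConsistentP edge Y A ∧
    ∀ p ∈ A, ∀ q ∈ A, p.firstEdge = q.firstEdge → a p p.src = a q p.src

/-- A directed path of a graph is a directed path of any supergraph. -/
def liftPath {edge edge' : V → V → Prop} (h : ∀ a b, edge a b → edge' a b)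
    (p : DiPath edge) : DiPath edge' :=
  ⟨p.verts, p.ne, p.chain.imp (fun {a b} hab => h a b hab)⟩

section NaturalReduction

variable {edge : V → V → Prop}

namespace DiPath

theorem ext {p q : DiPath edge} (h : p.verts = q.verts) : p = q := by
  cases p; cases q; congr

theorem choose_eq_of_verts_eq {P : Set (DiPath edge)} {l : List V}
    (h : ∃ p ∈ P, p.verts = l) {p : DiPath edge} (hp : p.verts = l) : h.choose = p :=
  ext (h.choose_spec.2.trans hp.symm)

theorem sink_mem_verts (p : DiPath edge) : p.sink ∈ p.verts := List.getLast_mem p.ne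

theorem verts_eq_dropLast_append_sink (p : DiPath edge) :
    p.verts = p.verts.dropLast ++ [p.sink] :=
  (List.dropLast_append_getLast p.ne).symm

theorem sink_eq_of_verts_eq_append_singleton {p : DiPath edge} {l : List V} {x : V}
    (h : p.verts = l ++ [x]) : p.sink = x := by
  obtain ⟨verts, ne, chain⟩ := p
  subst h
  simp [sink]

theorem src_eq_of_verts_eq_append_singleton {p q : DiPath edge} {x : V}
    (h : p.verts = q.verts ++ [x]) : p.src = q.src := by
  obtain ⟨verts, ne, chain⟩ := p
  subst h
  simp [src, List.head_append_of_ne_nil q.ne]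

theorem src_eq_of_verts_eq_pair {p : DiPath edge} {w v : V} (h : p.verts = [w, v]) :
    p.src = w := by
  obtain ⟨verts, ne, chain⟩ := p
  subst h
  rfl

theorem sink_eq_of_verts_eq_pair {p : DiPath edge} {w v : V} (h : p.verts = [w, v]) :
    p.sink = v :=
  sink_eq_of_verts_eq_append_singleton (l := [w]) h

theorem nodup_verts (hG : Acyclic edge) (p : DiPath edge) : p.verts.Nodup :=
  have : Std.Irrefl (Relation.TransGen edge) := ⟨hG⟩
  (p.chain.imp fun _ _ => Relation.TransGen.single).pairwise.nodup

theorem IsPrefix.subpath {q p : DiPath edge} (h : q.IsPrefix p) : q.Subpath p := by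
  obtain ⟨t, ht⟩ := h
  exact ⟨[], t, by simp [ht]⟩

theorem Subpath.trans {r q p : DiPath edge} (hrq : r.Subpath q) (hqp : q.Subpath p) :
    r.Subpath p := by
  obtain ⟨l, t, hq⟩ := hrq
  obtain ⟨l', t', hp⟩ := hqp
  exact ⟨l' ++ l, t ++ t', by simp [hp, hq]⟩

theorem Subpath.mem {r q : DiPath edge} (h : r.Subpath q) {x : V} (hx : x ∈ r.verts) :
    x ∈ q.verts := by
  obtain ⟨l, t, hq⟩ := h
  simp [hq, hx]

theorem Subpath.exists_eq_append_of_sink_eq (hG : Acyclic edge) {r q : DiPath edge}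
    (h : r.Subpath q) (hs : r.sink = q.sink) : ∃ l, q.verts = l ++ r.verts := by
  obtain ⟨l, t, hq⟩ := h
  suffices t = [] by exact ⟨l, by simpa [this] using hq⟩
  by_contra ht
  have hsink : q.sink ∈ t := by
    have : q.sink = t.getLast ht := by simp only [sink, hq, List.getLast_append_of_ne_nil _ ht]
    exact this ▸ List.getLast_mem ht
  have hnodup : (r.verts ++ t).Nodup := by
    have := nodup_verts hG q
    rw [hq, List.append_assoc] at this
    exact this.of_append_right
  exact List.disjoint_of_nodup_append hnodup (hs ▸ r.sink_mem_verts) hsink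

end DiPath

theorem rel_anti {Y : Set V} {S A : Set (DiPath edge)} (h : S ⊆ A) :
    rel edge Y A ⊆ rel edge Y S :=
  fun _ hp => ⟨hp.1, fun β hβ => hp.2 β (h hβ)⟩

theorem funnel_mono {S A : Set (DiPath edge)} (h : S ⊆ A) (w y : V) :
    funnel w y S ⊆ funnel w y A := by
  rintro q (⟨hq, hwq⟩ | ⟨hqs, p, hp, hpv⟩)
  · exact Or.inl ⟨h hq, hwq⟩
  · exact Or.inr ⟨hqs, p, h hp, hpv⟩

/-- The form of naturality that survives funnelling. -/
def SubpathClosedIn (S A : Set (DiPath edge)) : Prop :=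
  ∀ q ∈ S, ∀ r ∈ A, r.Subpath q → r ∈ S

theorem subpathClosedIn_of_natural {Y : Set V} {S A : Set (DiPath edge)} (hsub : S ⊆ A)
    (hlive : ∀ q ∈ S, Live edge Y A q)
    (hnat : ∀ p ∈ rel edge Y S, (∃ q ∈ S, q.IsPrefix p) →
      ∀ r ∈ A, r ∉ S → ¬ r.Subpath p) :
    SubpathClosedIn S A := by
  intro q hq r hr hrq
  by_contra hrS
  obtain ⟨p, hp, hqp⟩ := hlive q hq
  exact hnat p (rel_anti hsub hp) ⟨q, hq, hqp⟩ r hr hrS (hrq.trans hqp.subpath)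

theorem SubpathClosedIn.funnel (hG : Acyclic edge) {S A : Set (DiPath edge)}
    (h : SubpathClosedIn S A) (w v : V) :
    SubpathClosedIn (funnel w v S) (funnel w v A) := by
  intro q hq r hr hrq
  rcases hr with ⟨hrA, hwr⟩ | ⟨hrs, p, hpA, hpv⟩
  · refine Or.inl ⟨?_, hwr⟩
    rcases hq with ⟨hqS, -⟩ | ⟨-, p', hp'S, hp'v⟩
    · exact h q hqS r hrA hrq
    · exact h p' hp'S r hrA (hrq.trans ⟨[], [v], by simp [hp'v]⟩)
  · rcases hq with ⟨-, hwq⟩ | ⟨hqs, p', hp'S, hp'v⟩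
    · exact absurd (hrq.mem (hrs ▸ r.sink_mem_verts)) hwq
    · obtain ⟨l, hl⟩ := hrq.exists_eq_append_of_sink_eq hG (hrs.trans hqs.symm)
      exact Or.inr ⟨hrs, p, h p' hp'S p hpA ⟨l, [], by simp [hp'v, hl, hpv]⟩, hpv⟩

theorem sink_ne_of_mem_funnel {S A : Set (DiPath edge)} (h : SubpathClosedIn S A)
    {p : DiPath edge} (hpA : p ∈ A) (hpS : p ∉ S) {w v : V} (hpv : p.verts = [w, v]) :
    ∀ q ∈ funnel w v S, q.sink ≠ w := by
  rintro q (⟨-, hwq⟩ | ⟨-, p', hp'S, hp'v⟩) hqs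
  · exact hwq (hqs ▸ q.sink_mem_verts)
  · refine hpS (h p' hp'S p hpA ⟨q.verts.dropLast, [], ?_⟩)
    rw [hp'v, hpv, q.verts_eq_dropLast_append_sink, hqs]
    simp

section Responses

variable {X : V → Type}

theorem funnelAssign_of_sink_ne {A : Set (DiPath edge)} (a : DiPath edge → ∀ u, X u)
    {w y : V} {q : DiPath edge} (hq : q.sink ≠ w) : funnelAssign w y A a q = a q :=
  dif_neg fun h => hq h.1

theorem funnelAssign_of_verts_eq {A : Set (DiPath edge)} (a : DiPath edge → ∀ u, X u)
    {w y : V} {p q : DiPath edge} (hq : q.sink = w) (hp : p ∈ A)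
    (hpv : p.verts = q.verts ++ [y]) : funnelAssign w y A a q = a p := by
  have h : q.sink = w ∧ ∃ p ∈ A, p.verts = q.verts ++ [y] := ⟨hq, p, hp, hpv⟩
  rw [funnelAssign, dif_pos h, DiPath.choose_eq_of_verts_eq h.2 hpv]

theorem funnelAssign_src_eq {S A : Set (DiPath edge)} (hsub : S ⊆ A)
    {a₁ a₂ : DiPath edge → ∀ u, X u} (ha : ∀ q ∈ S, a₁ q q.src = a₂ q q.src)
    (w v : V) :
    ∀ q ∈ funnel w v S, funnelAssign w v A a₁ q q.src = funnelAssign w v S a₂ q q.src := by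
  rintro q (⟨hqS, hwq⟩ | ⟨hqs, p, hpS, hpv⟩)
  · have hsink : q.sink ≠ w := fun h => hwq (h ▸ q.sink_mem_verts)
    rw [funnelAssign_of_sink_ne _ hsink, funnelAssign_of_sink_ne _ hsink]
    exact ha q hqS
  · rw [funnelAssign_of_verts_eq _ hqs (hsub hpS) hpv, funnelAssign_of_verts_eq _ hqs hpS hpv,
      ← DiPath.src_eq_of_verts_eq_append_singleton hpv]
    exact ha p hpS

variable [Finite V] [∀ v, Nonempty (X v)]

theorem observed_unfold (hG : Acyclic edge) (C : CausalStructure V edge X) (v : V) :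
    observed hG C v = fun ω => C.f v (fun w =>
      if _ : Relation.TransGen edge w v then observed hG C w ω
      else Classical.arbitrary (X w)) ω := by
  unfold observed
  rw [WellFounded.fix_eq]

theorem pathResp_unfold (hG : Acyclic edge) (C : CausalStructure V edge X)
    (A : Set (DiPath edge)) (a : DiPath edge → ∀ u, X u) (v : V) :
    pathResp hG C A a v = fun ω => C.f v (fun w =>
      if h : ∃ p ∈ A, p.verts = [w, v] then a h.choose w
      else if _ : Relation.TransGen edge w v then
        pathResp hG C (funnel w v A) (funnelAssign w v A a) w ω
      else Classical.arbitrary (X w)) ω := by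
  unfold pathResp
  rw [WellFounded.fix_eq]

theorem pathRespNat_unfold (hG : Acyclic edge) (C : CausalStructure V edge X)
    (A S : Set (DiPath edge)) (a : DiPath edge → ∀ u, X u) (v : V) :
    pathRespNat hG C A S a v = fun ω => C.f v (fun w =>
      if h : ∃ p ∈ A, p.verts = [w, v] then
        (if h.choose ∈ S then a h.choose w else observed hG C w ω)
      else if _ : Relation.TransGen edge w v then
        pathRespNat hG C (funnel w v A) (funnel w v S) (funnelAssign w v A a) w ω
      else Classical.arbitrary (X w)) ω := by
  unfold pathRespNat
  rw [WellFounded.fix_eq]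

theorem pathResp_eq_observed (hG : Acyclic edge) (C : CausalStructure V edge X) (v : V)
    {A : Set (DiPath edge)} (a : DiPath edge → ∀ u, X u) (hA : ∀ q ∈ A, q.sink ≠ v) :
    pathResp hG C A a v = observed hG C v := by
  induction v using hG.wf.induction generalizing A a with
  | _ v IH =>
    rw [pathResp_unfold, observed_unfold]
    refine funext fun ω => congrFun (C.localDep v _ _ fun w hw => ?_) ω
    have hpair : ¬ ∃ p ∈ A, p.verts = [w, v] :=
      fun ⟨p, hp, hpv⟩ => hA p hp (DiPath.sink_eq_of_verts_eq_pair hpv)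
    rw [dif_neg hpair, dif_pos (.single hw), dif_pos (.single hw)]
    refine congrFun (IH w (.single hw) _ ?_) ω
    rintro q (⟨-, hwq⟩ | ⟨-, p, hp, hpv⟩)
    · exact fun h => hwq (h ▸ q.sink_mem_verts)
    · exact absurd (DiPath.sink_eq_of_verts_eq_append_singleton hpv) (hA p hp)

/-- Paths of `A ∖ S` carry natural values; when `S` is subpath-closed in `A` none of them can
lie on a path of `S`, so replacing them by the natural value is the same as dropping them. -/
theorem pathRespNat_eq_pathResp (hG : Acyclic edge) (C : CausalStructure V edge X) (v : V)
    {A S : Set (DiPath edge)} {a₁ a₂ : DiPath edge → ∀ u, X u} (hsub : S ⊆ A)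
    (hS : SubpathClosedIn S A) (ha : ∀ q ∈ S, a₁ q q.src = a₂ q q.src) :
    pathRespNat hG C A S a₁ v = pathResp hG C S a₂ v := by
  induction v using hG.wf.induction generalizing A S a₁ a₂ with
  | _ v IH =>
    rw [pathRespNat_unfold, pathResp_unfold]
    refine funext fun ω => congrFun (C.localDep v _ _ fun w hw => ?_) ω
    by_cases hA : ∃ p ∈ A, p.verts = [w, v]
    · obtain ⟨hpA, hpv⟩ := hA.choose_spec
      rw [dif_pos hA]
      by_cases hpS : hA.choose ∈ S
      · have hpairS : ∃ p ∈ S, p.verts = [w, v] := ⟨_, hpS, hpv⟩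
        rw [if_pos hpS, dif_pos hpairS, DiPath.choose_eq_of_verts_eq hpairS hpv]
        have h := ha _ hpS
        rwa [DiPath.src_eq_of_verts_eq_pair hpv] at h
      · have hpairS : ¬ ∃ p ∈ S, p.verts = [w, v] :=
          fun ⟨p, hp, hpv'⟩ => hpS (DiPath.ext (hpv.trans hpv'.symm) ▸ hp)
        rw [if_neg hpS, dif_neg hpairS, dif_pos (.single hw),
          pathResp_eq_observed hG C w _ (sink_ne_of_mem_funnel hS hpA hpS hpv)]
    · have hpairS : ¬ ∃ p ∈ S, p.verts = [w, v] :=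
        fun ⟨p, hp, hpv⟩ => hA ⟨p, hsub hp, hpv⟩
      rw [dif_neg hA, dif_neg hpairS, dif_pos (.single hw), dif_pos (.single hw),
        IH w (.single hw) (funnel_mono hsub w v) (hS.funnel hG w v)
          (funnelAssign_src_eq hsub ha w v)]

end Responses

end NaturalReduction

theorem natural_reduction_general {V : Type} [Fintype V] {X : V → Type} [∀ v, Nonempty (X v)]
    {edge : V → V → Prop} (hG : Acyclic edge)
    (Y : Set V) (A Astar : Set (DiPath edge)) (hsub : Astar ⊆ A)
    (hlive : LiveSet edge Y A)
    (hnat : ∀ p ∈ rel edge Y Astar, (∃ q ∈ Astar, q.IsPrefix p) →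
      ∀ r ∈ A, r ∉ Astar → ¬ r.Subpath p)
    (C : CausalStructure V edge X) (a : DiPath edge → ∀ u, X u) :
    ∀ s : ∀ u, X u,
      C.μ {ω | ∀ y ∈ Y, pathRespNat hG C A Astar a y ω = s y} =
        C.μ {ω | ∀ y ∈ Y, pathResp hG C Astar a y ω = s y} := by
  have hclosed : SubpathClosedIn Astar A :=
    subpathClosedIn_of_natural hsub (fun q hq => hlive q (hsub hq)) hnat
  intro s
  simp only [pathRespNat_eq_pathResp hG C _ hsub hclosed (a₂ := a) fun _ _ => rfl]

/-- if a path intervention assigning constants on `𝛂* ⊆ 𝛂` and natural values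
on `𝛂 ∖ 𝛂*` is natural for `𝐘`, then the joint distribution of the responses of `𝐘` equals
that of the responses to the path intervention on `𝛂*` alone with the same constants. -/
theorem natural_reduction {V : Type} [Fintype V] {X : V → Type} [∀ v, Nonempty (X v)]
    {edge : V → V → Prop} (hG : Acyclic edge)
    (Y : Set V) (A Astar : Set (DiPath edge)) (hsub : Astar ⊆ A)
    (hproper : Proper A) (hlive : LiveSet edge Y A)
    (hnat : ∀ p ∈ rel edge Y Astar, (∃ q ∈ Astar, q.IsPrefix p) →
      ∀ r ∈ A, r ∉ Astar → ¬ r.Subpath p)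
    (C : CausalStructure V edge X) (a : DiPath edge → ∀ u, X u) :
    ∀ s : ∀ u, X u,
      C.μ {ω | ∀ y ∈ Y, pathRespNat hG C A Astar a y ω = s y} =
        C.μ {ω | ∀ y ∈ Y, pathResp hG C Astar a y ω = s y} :=
  natural_reduction_general hG Y A Astar hsub hlive hnat C a

end CausalHierarchy
end

section
/- Let G be the directed acyclic graph with vertex set {A, B, C} and edges A→B and A→C, with all state spaces equal to {0,1}, and let a ≠ a' be two values of A. Then there exist two causal structures in the single world model (SWM) for G having identical observed joint distributions of (A, B, C) but different joint distributions of the responses (B(𝔞), C(𝔞)) to the edge intervention 𝔞 setting (A→B) to a and (A→C) to a'; similarly there exist such pairs for the edge intervention setting only (A→B) to a, and for the edge intervention setting only (A→C) to a. Consequently, none of these three response distributions is identified from p(A,B,C) under the SWM for G. -/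
open scoped Classical
open MeasureTheory

namespace CausalHierarchy

variable {V : Type}

variable {X : V → Type}

/-- The graph with vertices `A = 0`, `B = 1`, `C = 2` and edges `A → B`, `A → C`. -/
def edge03 : Fin 3 → Fin 3 → Prop := fun i j => i = 0 ∧ (j = 1 ∨ j = 2)

theorem edge03_acyclic : Acyclic edge03 := by
  intro x hx
  have h0 : ∀ y, Relation.TransGen edge03 x y → x = 0 := by
    intro y hy
    induction hy with
    | single h => exact h.1
    | tail _ _ ih => exact ih
  have h1 : x = 1 ∨ x = 2 := by
    cases hx with
    | single h => exact h.2
    | tail _ h => exact h.2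
  rw [h0 x hx] at h1
  rcases h1 with h1 | h1 <;> exact absurd h1 (by decide)

/-- The joint distribution of the responses `(B, C)` to an edge intervention on the graph
`A → B`, `A → C`, all state spaces `{0,1}`. -/
noncomputable def respDist10 (E : Set (Fin 3 × Fin 3))
    (aE : Fin 3 × Fin 3 → ∀ _ : Fin 3, Fin 2)
    (C : CausalStructure (Fin 3) edge03 (fun _ => Fin 2)) :
    (∀ _ : Fin 3, Fin 2) → ENNReal :=
  fun s => C.μ {ω | ∀ y ∈ ({1, 2} : Set (Fin 3)), edgeResp edge03_acyclic C E aE y ω = s y}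

/-- Two causal structures in the SWM with identical observed distributions but different
joint response distributions for the given edge intervention. -/
def NonIdWitness10 (E : Set (Fin 3 × Fin 3))
    (aE : Fin 3 × Fin 3 → ∀ _ : Fin 3, Fin 2) : Prop :=
  ∃ C₁ C₂ : CausalStructure (Fin 3) edge03 (fun _ => Fin 2),
    SWM C₁ ∧ SWM C₂ ∧ obsDist edge03_acyclic C₁ = obsDist edge03_acyclic C₂ ∧
    respDist10 E aE C₁ ≠ respDist10 E aE C₂

/-! Under the single world model `A, B(x), C(x)` are independent only within one world `x`, so
`p(A,B,C)` determines the laws of `A`, `B(b)` and `C(b)` but not how `B(b)` and `C(b')` are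
coupled for `b ≠ b'`. Each response depends on such a coupling: `(B(a), C(a'))` directly, and
`(B(a), C)` and `(B, C(a))` on the event `A ≠ a`. Take three fair coins, let `A` read the
first, and let `B(b)`, `C(b)` read the other two in an order that may depend on `b`. Within a
world they read distinct coins, so the model is single-world and `(A, B, C)` is uniform whatever
the order; a fixed order makes the cross-world pairs independent, swapping it with `b` makes
them equal. -/

open ProbabilityTheory

theorem edgeResp_eq [Finite V] {edge : V → V → Prop} [∀ v, Nonempty (X v)]
    (hG : Acyclic edge) (C : CausalStructure V edge X) (E : Set (V × V))
    (aE : V × V → ∀ u, X u) (v : V) (ω : C.Ω) :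
    edgeResp hG C E aE v ω = C.f v (fun w =>
      if (w, v) ∈ E then aE (w, v) w
      else if Relation.TransGen edge w v then edgeResp hG C E aE w ω
      else Classical.arbitrary (X w)) ω := by
  rw [edgeResp, WellFounded.fix_eq]; rfl

theorem edgeResp_empty [Finite V] {edge : V → V → Prop} [∀ v, Nonempty (X v)]
    (hG : Acyclic edge) (C : CausalStructure V edge X) (aE : V × V → ∀ u, X u) :
    edgeResp hG C ∅ aE = observed hG C := by
  unfold edgeResp observed
  simp only [Set.mem_empty_iff_false, ite_false]

theorem edge03_transGen_of_ne_zero {v : Fin 3} (hv : v ≠ 0) : Relation.TransGen edge03 0 v :=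
  .single ⟨rfl, by omega⟩

noncomputable def fairCoins (ι : Type) [Fintype ι] : Measure (ι → Fin 2) :=
  Measure.pi fun _ => (PMF.uniformOfFintype (Fin 2)).toMeasure

section FairCoins

variable {ι : Type} [Fintype ι]

instance : IsProbabilityMeasure (fairCoins ι) := by
  unfold fairCoins; infer_instance

theorem fairCoins_singleton (ω : ι → Fin 2) : fairCoins ι {ω} = 2⁻¹ ^ Fintype.card ι := by
  simp [fairCoins]

theorem fairCoins_coe_finset (s : Finset (ι → Fin 2)) :
    fairCoins ι s = s.card * 2⁻¹ ^ Fintype.card ι := by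
  rw [← sum_measure_singleton]
  simp [fairCoins_singleton]

theorem iIndepFun_eval_fairCoins : iIndepFun (fun i (ω : ι → Fin 2) => ω i) (fairCoins ι) :=
  iIndepFun_pi (X := fun _ => id) fun _ => aemeasurable_id

end FairCoins

section CoinStructure

variable (π : Fin 2 → Equiv.Perm (Fin 3)) (hπ : ∀ b, π b 0 = 0)

noncomputable def coinStructure : CausalStructure (Fin 3) edge03 (fun _ => Fin 2) where
  Ω := Fin 3 → Fin 2
  m := inferInstance
  μ := fairCoins (Fin 3)
  prob := measure_univ
  f v x ω := ω (π (x 0) v)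
  localDep v x y h := by
    by_cases hv : v = 0
    · subst hv; simp only [hπ]
    · rw [h 0 ⟨rfl, by omega⟩]

theorem edgeResp_coinStructure (E : Set (Fin 3 × Fin 3))
    (aE : Fin 3 × Fin 3 → ∀ _ : Fin 3, Fin 2) (v : Fin 3) (ω : Fin 3 → Fin 2) :
    edgeResp edge03_acyclic (coinStructure π hπ) E aE v ω =
      ω (π (if (0, v) ∈ E then aE (0, v) 0 else ω 0) v) := by
  have root : ∀ ω, edgeResp edge03_acyclic (coinStructure π hπ) E aE 0 ω = ω 0 := fun ω => by
    rw [edgeResp_eq]; exact congrArg ω (hπ _)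
  by_cases hv : v = 0
  · subst hv; exact (root ω).trans (congrArg ω (hπ _)).symm
  · refine (edgeResp_eq edge03_acyclic (coinStructure π hπ) E aE v ω).trans ?_
    show ω (π (if _ then _ else _) v) = _
    rw [if_pos (edge03_transGen_of_ne_zero hv), root ω]

theorem observed_coinStructure (v : Fin 3) (ω : Fin 3 → Fin 2) :
    observed edge03_acyclic (coinStructure π hπ) v ω = ω (π (ω 0) v) := by
  rw [← edgeResp_empty (aE := fun _ _ => 0), edgeResp_coinStructure, if_neg (Set.notMem_empty _)]

theorem swm_coinStructure : SWM (coinStructure π hπ) := by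
  intro x S s
  have hind := (iIndepFun_eval_fairCoins (ι := Fin 3)).precomp (π (x 0)).injective
  have := hind.meas_biInter (S := S) (s := fun v => {ω | ω (π (x 0) v) = s v})
    fun v _ => ⟨{s v}, measurableSet_singleton _, rfl⟩
  simp only [Set.iInter_ofPred] at this
  exact this

theorem obsDist_coinStructure (s : Fin 3 → Fin 2) :
    obsDist edge03_acyclic (coinStructure π hπ) s = 2⁻¹ ^ 3 := by
  have hset : {ω : Fin 3 → Fin 2 | ∀ v, ω (π (ω 0) v) = s v} = {s ∘ (π (s 0)).symm} := by
    ext ω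
    simp only [Set.mem_ofPred_eq, Set.mem_singleton_iff]
    constructor
    · intro h
      have h0 : ω 0 = s 0 := by simpa only [hπ] using h 0
      funext v
      have := h ((π (s 0)).symm v)
      rwa [h0, Equiv.apply_symm_apply] at this
    · rintro rfl v
      have h0 : (π (s 0)).symm 0 = 0 := by rw [Equiv.symm_apply_eq, hπ]
      simp [h0]
  show fairCoins (Fin 3) {ω | ∀ v, observed edge03_acyclic (coinStructure π hπ) v ω = s v} = _
  simp only [observed_coinStructure, hset, fairCoins_singleton, Fintype.card_fin]

noncomputable def coinResponseEvent (E : Set (Fin 3 × Fin 3))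
    (aE : Fin 3 × Fin 3 → ∀ _ : Fin 3, Fin 2) (s : Fin 3 → Fin 2) : Finset (Fin 3 → Fin 2) :=
  Finset.univ.filter fun ω =>
    ω (π (if (0, 1) ∈ E then aE (0, 1) 0 else ω 0) 1) = s 1 ∧
      ω (π (if (0, 2) ∈ E then aE (0, 2) 0 else ω 0) 2) = s 2

theorem respDist10_coinStructure (E : Set (Fin 3 × Fin 3))
    (aE : Fin 3 × Fin 3 → ∀ _ : Fin 3, Fin 2) (s : Fin 3 → Fin 2) :
    respDist10 E aE (coinStructure π hπ) s = (coinResponseEvent π E aE s).card * 2⁻¹ ^ 3 := by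
  show fairCoins (Fin 3) {ω | ∀ y ∈ ({1, 2} : Set (Fin 3)),
    edgeResp edge03_acyclic (coinStructure π hπ) E aE y ω = s y} = _
  simp only [Set.forall_mem_insert, Set.mem_singleton_iff, forall_eq, edgeResp_coinStructure]
  rw [coinResponseEvent, ← Finset.coe_filter_univ, fairCoins_coe_finset, Fintype.card_fin]

end CoinStructure

theorem nonIdWitness10_of_coinStructure {π₁ π₂ : Fin 2 → Equiv.Perm (Fin 3)}
    (h₁ : ∀ b, π₁ b 0 = 0) (h₂ : ∀ b, π₂ b 0 = 0) {E : Set (Fin 3 × Fin 3)}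
    {aE : Fin 3 × Fin 3 → ∀ _ : Fin 3, Fin 2} (s : Fin 3 → Fin 2)
    (hs : (coinResponseEvent π₁ E aE s).card ≠ (coinResponseEvent π₂ E aE s).card) :
    NonIdWitness10 E aE := by
  refine ⟨coinStructure π₁ h₁, coinStructure π₂ h₂, swm_coinStructure π₁ h₁,
    swm_coinStructure π₂ h₂, funext fun s => ?_, fun h => hs ?_⟩
  · rw [obsDist_coinStructure, obsDist_coinStructure]
  · have := congrFun h s
    rwa [respDist10_coinStructure, respDist10_coinStructure,
      ENNReal.mul_left_inj (by simp) (by simp), Nat.cast_inj] at this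

theorem NonIdWitness10.not_identified {E : Set (Fin 3 × Fin 3)}
    {aE : Fin 3 × Fin 3 → ∀ _ : Fin 3, Fin 2} (h : NonIdWitness10 E aE) :
    ¬ Identified edge03_acyclic (fun C => SWM C) (respDist10 E aE) := by
  obtain ⟨C₁, C₂, hC₁, hC₂, hobs, hresp⟩ := h
  exact fun hid => hresp (hid C₁ C₂ hC₁ hC₂ hobs)

def swapBC (b : Fin 2) : Equiv.Perm (Fin 3) := if b = 0 then 1 else Equiv.swap 1 2

theorem swapBC_zero (b : Fin 2) : swapBC b 0 = 0 := by
  revert b; decide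

/- The response event `B = 0, C = 1` holds on 2 of the 8 coin outcomes when the order is fixed,
and on 0, 1 and 1 of them for the three interventions below when it is swapped. -/

theorem nonIdWitness10_both_edges (a a' : Fin 2) (hne : a ≠ a') :
    NonIdWitness10 {((0 : Fin 3), (1 : Fin 3)), ((0 : Fin 3), (2 : Fin 3))}
      (fun e _ => if e.2 = 1 then a else a') :=
  nonIdWitness10_of_coinStructure (fun _ => Equiv.Perm.one_apply 0) swapBC_zero ![0, 0, 1] <| by
    simp only [coinResponseEvent, Set.mem_insert_iff, Set.mem_singleton_iff, Prod.mk.injEq,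
      Fin.reduceEq, and_false, or_false, ↓reduceIte]
    revert a a'; decide

theorem nonIdWitness10_edge_AB (a : Fin 2) :
    NonIdWitness10 {((0 : Fin 3), (1 : Fin 3))} (fun _ _ => a) :=
  nonIdWitness10_of_coinStructure (fun _ => Equiv.Perm.one_apply 0) swapBC_zero ![0, 0, 1] <| by
    simp only [coinResponseEvent, Set.mem_singleton_iff, Prod.mk.injEq, Fin.reduceEq, and_false,
      ↓reduceIte]
    revert a; decide

theorem nonIdWitness10_edge_AC (a : Fin 2) :
    NonIdWitness10 {((0 : Fin 3), (2 : Fin 3))} (fun _ _ => a) :=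
  nonIdWitness10_of_coinStructure (fun _ => Equiv.Perm.one_apply 0) swapBC_zero ![0, 0, 1] <| by
    simp only [coinResponseEvent, Set.mem_singleton_iff, Prod.mk.injEq, Fin.reduceEq, and_false,
      ↓reduceIte]
    revert a; decide

/-- for the graph `A → B`, `A → C` with binary state spaces and `a ≠ a'`, the
joint responses to the edge intervention setting `(A→B)` to `a` and `(A→C)` to `a'`, to the
edge intervention setting only `(A→B)` to `a`, and to the edge intervention setting only
`(A→C)` to `a`, are all not identified from `p(A,B,C)` under the single world model. -/
theorem edge03_non_identification (a a' : Fin 2) (hne : a ≠ a') :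
    NonIdWitness10 {((0 : Fin 3), (1 : Fin 3)), ((0 : Fin 3), (2 : Fin 3))}
      (fun e _ => if e.2 = 1 then a else a') ∧
    NonIdWitness10 {((0 : Fin 3), (1 : Fin 3))} (fun _ _ => a) ∧
    NonIdWitness10 {((0 : Fin 3), (2 : Fin 3))} (fun _ _ => a) ∧
    ¬ Identified edge03_acyclic (fun C => SWM C)
      (respDist10 {((0 : Fin 3), (1 : Fin 3)), ((0 : Fin 3), (2 : Fin 3))}
        (fun e _ => if e.2 = 1 then a else a')) ∧
    ¬ Identified edge03_acyclic (fun C => SWM C)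
      (respDist10 {((0 : Fin 3), (1 : Fin 3))} (fun _ _ => a)) ∧
    ¬ Identified edge03_acyclic (fun C => SWM C)
      (respDist10 {((0 : Fin 3), (2 : Fin 3))} (fun _ _ => a)) := by
  have w₁ := nonIdWitness10_both_edges a a' hne
  have w₂ := nonIdWitness10_edge_AB a
  have w₃ := nonIdWitness10_edge_AC a
  exact ⟨w₁, w₂, w₃, w₁.not_identified, w₂.not_identified, w₃.not_identified⟩

end CausalHierarchy
end
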